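/- For every positive integer n, S_6(n) = (15n^2−15n+4)·n·2^{2n−3}. -/

import Mathlib

/-!
Since the exponent is even, `|n - k|⁶ = (2k - 2n)⁶ / 2⁶`, so the sum is `2⁻⁶ M₆(2n)`, where
`Mᵣ(m) = ∑ₖ C(m,k) (2k - m)ʳ` is `2ᵐ` times the `r`-th moment of a sum of `m` independent
uniform `±1` signs. Pascal's rule gives `Mᵣ(m+1) = ∑ₖ C(m,k) ((x-1)ʳ + (x+1)ʳ)` with
`x = 2k - m`, so the even moments satisfy a triangular linear recurrence, and induction on `m` yields
`M₆(m) = (15m³ - 30m² + 16m) 2ᵐ`.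
-/

open Finset

section CentralBinomialMoment

variable {R : Type*} [CommRing R]

variable (R) in
def centralBinomialMoment (m r : ℕ) : R :=
  ∑ k ∈ range (m + 1), (m.choose k : R) * (2 * k - m) ^ r

theorem centralBinomialMoment_succ (m r : ℕ) :
    centralBinomialMoment R (m + 1) r =
      ∑ j ∈ range (r + 1), (r.choose j : R) * (1 + (-1) ^ (r - j)) *
        centralBinomialMoment R m j := by
  have pascal : centralBinomialMoment R (m + 1) r =
      ∑ k ∈ range (m + 1), (m.choose k : R) *
        (((2 * k - m : R) + -1) ^ r + ((2 * k - m : R) + 1) ^ r) := by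
    have h := sum_choose_succ_mul (fun i _ => (2 * i - (m + 1 : R)) ^ r) m
    simp only [centralBinomialMoment, Nat.cast_add_one, h, mul_add, sum_add_distrib]
    congr 1 <;> refine sum_congr rfl fun k _ => ?_ <;> ring
  rw [pascal]
  simp only [add_pow, centralBinomialMoment, mul_sum, ← sum_add_distrib]
  rw [sum_comm]
  refine sum_congr rfl fun j _ => sum_congr rfl fun k _ => ?_
  rw [one_pow]
  ring

theorem centralBinomialMoment_zero_right (m : ℕ) : centralBinomialMoment R m 0 = 2 ^ m := by
  simp only [centralBinomialMoment, pow_zero, mul_one, ← Nat.cast_sum, Nat.sum_range_choose,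
    Nat.cast_pow, Nat.cast_ofNat]

theorem centralBinomialMoment_two_right (m : ℕ) : centralBinomialMoment R m 2 = m * 2 ^ m := by
  induction m with
  | zero => simp [centralBinomialMoment]
  | succ m ih =>
    simp only [centralBinomialMoment_succ, sum_range_succ, sum_range_zero,
      centralBinomialMoment_zero_right, ih]
    norm_num [Nat.choose]
    ring

theorem centralBinomialMoment_four_right (m : ℕ) :
    centralBinomialMoment R m 4 = (3 * m ^ 2 - 2 * m) * 2 ^ m := by
  induction m with
  | zero => simp [centralBinomialMoment]
  | succ m ih =>
    simp only [centralBinomialMoment_succ, sum_range_succ, sum_range_zero,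
      centralBinomialMoment_zero_right, centralBinomialMoment_two_right, ih]
    norm_num [Nat.choose]
    ring

theorem centralBinomialMoment_six_right (m : ℕ) :
    centralBinomialMoment R m 6 = (15 * m ^ 3 - 30 * m ^ 2 + 16 * m) * 2 ^ m := by
  induction m with
  | zero => simp [centralBinomialMoment]
  | succ m ih =>
    simp only [centralBinomialMoment_succ, sum_range_succ, sum_range_zero,
      centralBinomialMoment_zero_right, centralBinomialMoment_two_right,
      centralBinomialMoment_four_right, ih]
    norm_num [Nat.choose]
    ring

end CentralBinomialMoment

theorem stmt_9 (n : ℕ) :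
    ∑ k ∈ Finset.range (2 * n + 1), (Nat.choose (2 * n) k : ℚ) * |(n : ℚ) - k| ^ 6 =
      (15 * n ^ 2 - 15 * n + 4) * n * (2 : ℚ) ^ (2 * (n : ℤ) - 3) := by
  have sum_eq : ∑ k ∈ range (2 * n + 1), (Nat.choose (2 * n) k : ℚ) * |(n : ℚ) - k| ^ 6 =
      centralBinomialMoment ℚ (2 * n) 6 / 2 ^ 6 := by
    rw [centralBinomialMoment, sum_div]
    refine sum_congr rfl fun k _ => ?_
    rw [Even.pow_abs ⟨3, rfl⟩]
    push_cast
    ring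
  have zpow_eq : (2 : ℚ) ^ (2 * (n : ℤ) - 3) = 2 ^ (2 * n) / 2 ^ 3 := by
    rw [zpow_sub₀ two_ne_zero]
    norm_cast
  rw [sum_eq, zpow_eq, centralBinomialMoment_six_right]
  push_cast
  ring
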